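/- arXiv:1707.05231 — 4 statements merged into one kernel-verified Lean document; each statement's English description precedes it below -/
import Mathlib

section
/- Let (a,b) be a lattice direction with a ≥ 0 and let M, N ≥ 1 with a < M and |b| < N. Then the number of lattice lines with direction (a,b) that intersect the grid A = {(i,j) ∈ ℤ² : 0 ≤ i < M, 0 ≤ j < N} is exactly (M − a)|b| + (N − |b|)a + a|b|. -/
/-- For a lattice direction `(a,b)` with `a ≥ 0`, `a < M`, `|b| < N`,
the number of lattice lines `a·y = b·x + t` that contain at least one point of the grid
`{0,…,M-1} × {0,…,N-1}` is `(M-a)·|b| + (N-|b|)·a + a·|b|`. -/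
theorem stmt1 (a b M N : ℤ) (ha : 0 ≤ a) (hcop : IsCoprime a b)
    (hb0 : b = 0 → a = 1) (ha0 : a = 0 → b = 1)
    (hM : 1 ≤ M) (hN : 1 ≤ N) (haM : a < M) (hbN : |b| < N) :
    (Set.ncard {t : ℤ | ∃ i j : ℤ, 0 ≤ i ∧ i < M ∧ 0 ≤ j ∧ j < N ∧ a * j = b * i + t} : ℤ)
      = (M - a) * |b| + (N - |b|) * a + a * |b| := by
  classical
  have habs : 0 ≤ |b| := abs_nonneg b
  set G : Finset (ℤ × ℤ) := Finset.Ico 0 M ×ˢ Finset.Ico 0 N with hGdef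
  have hGmem : ∀ p : ℤ × ℤ, p ∈ G ↔ (0 ≤ p.1 ∧ p.1 < M ∧ 0 ≤ p.2 ∧ p.2 < N) := by
    intro p
    simp only [hGdef, Finset.mem_product, Finset.mem_Ico]
    tauto
  set φ : ℤ × ℤ → ℤ := fun p => a * p.2 - b * p.1 with hφdef
  set S : Finset (ℤ × ℤ) := G.filter (fun p => (p.1 - a, p.2 - b) ∉ G) with hSdef
  -- the set of t's is exactly the image of S under φ
  have hset : {t : ℤ | ∃ i j : ℤ, 0 ≤ i ∧ i < M ∧ 0 ≤ j ∧ j < N ∧ a * j = b * i + t}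
      = ↑(S.image φ) := by
    ext t
    simp only [Set.mem_setOf_eq, Finset.coe_image, Set.mem_image, Finset.mem_coe]
    constructor
    · rintro ⟨i, j, hi0, hiM, hj0, hjN, heq⟩
      set L : Finset (ℤ × ℤ) := G.filter (fun p => a * p.2 = b * p.1 + t) with hLdef
      have hne : L.Nonempty := ⟨(i, j), by
        rw [hLdef, Finset.mem_filter]
        exact ⟨(hGmem (i, j)).2 ⟨hi0, hiM, hj0, hjN⟩, heq⟩⟩
      obtain ⟨p, hpL, hmin⟩ :=
        L.exists_min_image (fun p => p.1 + (if 0 ≤ b then p.2 else -p.2)) hne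
      rw [hLdef, Finset.mem_filter] at hpL
      obtain ⟨hpG, hpline⟩ := hpL
      refine ⟨p, ?_, by simp only [hφdef]; linarith⟩
      rw [hSdef, Finset.mem_filter]
      refine ⟨hpG, fun hq => ?_⟩
      have hqL : (p.1 - a, p.2 - b) ∈ L := by
        rw [hLdef, Finset.mem_filter]
        refine ⟨hq, by ring_nf; linarith⟩
      have := hmin _ hqL
      simp only at this
      by_cases hb : 0 ≤ b
      · simp only [if_pos hb] at this
        have hb' : b = 0 → False := fun h => by
          have := hb0 h; omega
        rcases lt_or_eq_of_le hb with hb | hb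
        · linarith
        · exact hb' hb.symm
      · simp only [if_neg hb] at this
        push_neg at hb
        linarith
    · rintro ⟨p, hpS, rfl⟩
      rw [hSdef, Finset.mem_filter] at hpS
      obtain ⟨hpG, -⟩ := hpS
      obtain ⟨h1, h2, h3, h4⟩ := (hGmem p).1 hpG
      exact ⟨p.1, p.2, h1, h2, h3, h4, by simp only [hφdef]; ring⟩
  -- injectivity of φ on S
  have hinj : Set.InjOn φ ↑S := by
    intro p hp q hq heq
    simp only [Finset.mem_coe, hSdef, Finset.mem_filter] at hp hq
    obtain ⟨hpG, hpS⟩ := hp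
    obtain ⟨hqG, hqS⟩ := hq
    obtain ⟨hp1, hp2, hp3, hp4⟩ := (hGmem p).1 hpG
    obtain ⟨hq1, hq2, hq3, hq4⟩ := (hGmem q).1 hqG
    simp only [hφdef] at heq
    -- find k with p = q + k • (a,b)
    obtain ⟨k, hk1, hk2⟩ : ∃ k : ℤ, p.1 = q.1 + a * k ∧ p.2 = q.2 + b * k := by
      rcases eq_or_ne a 0 with h0 | h0
      · have hb1 : b = 1 := ha0 h0
        refine ⟨p.2 - q.2, by rw [h0]; simp; nlinarith [heq], by rw [hb1]; ring⟩
      · have hdvd : a ∣ (p.1 - q.1) := by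
          refine hcop.dvd_of_dvd_mul_left ⟨p.2 - q.2, ?_⟩
          ring_nf
          linarith
        obtain ⟨k, hk⟩ := hdvd
        refine ⟨k, by linarith, ?_⟩
        have : a * (p.2 - q.2) = a * (b * k) := by
          have : a * (p.2 - q.2) = b * (p.1 - q.1) := by linarith
          rw [this, hk]; ring
        have := mul_left_cancel₀ h0 this
        linarith
    -- show k = 0
    have hk0 : k = 0 := by
      by_contra hk0
      rcases lt_or_gt_of_ne hk0 with hk | hk
      · -- k < 0 : then (q.1 - a, q.2 - b) ∈ G, contradiction with hqS
        apply hqS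
        rw [hGmem]
        have hq1' : q.1 - a = p.1 + a * (-k - 1) := by linarith
        have hq2' : q.2 - b = p.2 + b * (-k - 1) := by linarith
        have hknn : 0 ≤ -k - 1 := by omega
        dsimp only
        refine ⟨?_, ?_, ?_, ?_⟩
        · nlinarith [mul_nonneg ha hknn]
        · linarith
        · rcases le_or_gt 0 b with hb | hb
          · nlinarith [mul_nonneg hb hknn]
          · linarith
        · rcases le_or_gt 0 b with hb | hb
          · linarith
          · nlinarith [mul_nonneg (neg_nonneg.2 hb.le) hknn]
      · -- k > 0 : then (p.1 - a, p.2 - b) ∈ G, contradiction with hpS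
        apply hpS
        rw [hGmem]
        have hp1' : p.1 - a = q.1 + a * (k - 1) := by linarith
        have hp2' : p.2 - b = q.2 + b * (k - 1) := by linarith
        have hknn : 0 ≤ k - 1 := by omega
        dsimp only
        refine ⟨?_, ?_, ?_, ?_⟩
        · nlinarith [mul_nonneg ha hknn]
        · linarith
        · rcases le_or_gt 0 b with hb | hb
          · nlinarith [mul_nonneg hb hknn]
          · linarith
        · rcases le_or_gt 0 b with hb | hb
          · linarith
          · nlinarith [mul_nonneg (neg_nonneg.2 hb.le) hknn]
    have e1 : p.1 = q.1 := by rw [hk1, hk0]; ring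
    have e2 : p.2 = q.2 := by rw [hk2, hk0]; ring
    exact Prod.ext e1 e2
  -- counting
  set T : Finset (ℤ × ℤ) := G.filter (fun p => (p.1 - a, p.2 - b) ∈ G) with hTdef
  have hsplit : T.card + S.card = G.card := by
    rw [hTdef, hSdef]
    exact Finset.card_filter_add_card_filter_not _
  have hGcard : (G.card : ℤ) = M * N := by
    rw [hGdef, Finset.card_product, Int.card_Ico, Int.card_Ico]
    push_cast
    rw [Int.toNat_of_nonneg (by linarith), Int.toNat_of_nonneg (by linarith)]
    ring
  have hTprod : T = Finset.Ico a M ×ˢ Finset.Ico (max b 0) (min N (N + b)) := by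
    ext p
    simp only [hTdef, Finset.mem_filter, hGdef, Finset.mem_product, Finset.mem_Ico]
    omega
  have hTcard : (T.card : ℤ) = (M - a) * (N - |b|) := by
    rw [hTprod, Finset.card_product, Int.card_Ico, Int.card_Ico]
    have hmm : N ⊓ (N + b) - b ⊔ 0 = N - |b| := by
      rcases le_or_gt 0 b with hb | hb
      · rw [abs_of_nonneg hb, sup_eq_left.mpr hb, inf_eq_left.mpr (by linarith)]
      · rw [abs_of_neg hb, sup_eq_right.mpr hb.le, inf_eq_right.mpr (by linarith)]
        ring
    have hnn : (0 : ℤ) ≤ N - |b| := by linarith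
    rw [Nat.cast_mul, Int.toNat_of_nonneg (by linarith), hmm,
      Int.toNat_of_nonneg hnn]
  have hScard : (S.card : ℤ) = M * N - (M - a) * (N - |b|) := by
    have : (T.card : ℤ) + (S.card : ℤ) = (G.card : ℤ) := by exact_mod_cast hsplit
    rw [hGcard, hTcard] at this
    linarith
  rw [hset, Set.ncard_coe_finset, Finset.card_image_of_injOn hinj, hScard]
  ring
end

section
/- Let S = {(a_r, b_r) : r = 1,…,d} be a set of lattice directions, where for each r one defines f_{(a_r,b_r)}(x,y) = x^{a_r} y^{b_r} − 1 if b_r > 0, f_{(a_r,b_r)}(x,y) = x^{a_r} − y^{−b_r} if b_r < 0, f_{(1,0)} = x − 1, f_{(0,1)} = y − 1. If some b_r < 0, then the product F_S(x,y) = ∏_r f_{(a_r,b_r)}(x,y) contains a nonzero monomial of the form α·y^j for some j ∈ ℕ and α ≠ 0; hence in all cases the lattice set associated to F_S intersects the y-axis. -/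
/-!
Substituting `x = 0` is a ring homomorphism `ℤ[x, y] → ℤ[y]` (realised as the constant
coefficient of `finSuccEquiv`, which views `ℤ[x, y]` as `ℤ[y][x]`), and the coefficients of the
image are exactly the coefficients of the monomials `y^j`. Each factor `f_{(a,b)}` maps to one of
`-1`, `y^b - 1`, `1 - y^{-b}`, `-y^{-b}`, which is zero only if `b = 0` and `a ≤ 0`; so in the
domain `ℤ[y]` the image of `F_S` is nonzero.
-/

open MvPolynomial

/-- The binomial associated to a lattice direction `(a,b)` with `a ≥ 0`:
`x^a y^b - 1` if `b ≥ 0`, and `x^a - y^{-b}` if `b < 0`. -/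
noncomputable def dirPoly (a b : ℤ) : MvPolynomial (Fin 2) ℤ :=
  if 0 ≤ b then X 0 ^ a.toNat * X 1 ^ b.toNat - 1
  else X 0 ^ a.toNat - X 1 ^ (-b).toNat

lemma exists_coeff_single_one_ne_zero {R : Type*} [CommSemiring R] {p : MvPolynomial (Fin 2) R}
    (hp : Polynomial.constantCoeff (finSuccEquiv R 1 p) ≠ 0) :
    ∃ j : ℕ, coeff (Finsupp.single 1 j) p ≠ 0 := by
  obtain ⟨m, hm⟩ := ne_zero_iff.mp hp
  refine ⟨m 0, ?_⟩
  rwa [Polynomial.constantCoeff_apply, finSuccEquiv_coeff_coeff, Finsupp.unique_single m,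
    Fin.default_eq_zero, Finsupp.cons_zero_single_eq_single_succ] at hm

lemma finSuccEquiv_X_one {R : Type*} [CommSemiring R] :
    finSuccEquiv R 1 (X 1) = Polynomial.C (X 0) :=
  finSuccEquiv_X_succ (j := 0)

lemma constantCoeff_finSuccEquiv_dirPoly_ne_zero {a b : ℤ} (hab : b = 0 → 0 < a) :
    Polynomial.constantCoeff (finSuccEquiv ℤ 1 (dirPoly a b)) ≠ 0 := by
  unfold dirPoly
  simp only [apply_ite, map_sub, map_mul, map_pow, map_one, finSuccEquiv_X_zero,
    finSuccEquiv_X_one, Polynomial.constantCoeff_apply, Polynomial.coeff_X_zero,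
    Polynomial.coeff_C_zero]
  split_ifs with hb
  · have hexp : a.toNat + b.toNat ≠ 0 := by omega
    intro h
    simpa [← pow_add, zero_pow hexp] using congrArg constantCoeff h
  · have hn : (-b).toNat ≠ 0 := by omega
    rcases Nat.eq_zero_or_pos a.toNat with ha | ha
    · intro h
      simpa [ha, zero_pow hn] using congrArg constantCoeff h
    · rw [zero_pow ha.ne', zero_sub, neg_ne_zero]
      exact pow_ne_zero _ (X_ne_zero 0)

theorem stmt3_general (d : ℕ) (dir : Fin d → ℤ × ℤ)
    (hb0 : ∀ r, (dir r).2 = 0 → (dir r).1 = 1) :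
    ((∃ r, (dir r).2 < 0) →
      ∃ j : ℕ, MvPolynomial.coeff (Finsupp.single 1 j)
        (∏ r, dirPoly (dir r).1 (dir r).2) ≠ 0) ∧
    (∃ j : ℕ, MvPolynomial.coeff (Finsupp.single 1 j)
        (∏ r, dirPoly (dir r).1 (dir r).2) ≠ 0) := by
  have key : ∃ j : ℕ, MvPolynomial.coeff (Finsupp.single 1 j)
      (∏ r, dirPoly (dir r).1 (dir r).2) ≠ 0 := by
    apply exists_coeff_single_one_ne_zero
    rw [map_prod, map_prod]
    refine Finset.prod_ne_zero_iff.mpr fun r _ => ?_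
    exact constantCoeff_finSuccEquiv_dirPoly_ne_zero fun hb => (hb0 r hb).symm ▸ one_pos
  exact ⟨fun _ => key, key⟩

/-- If some direction has `b_r < 0`, then `F_S = ∏_r f_{(a_r,b_r)}`
contains a nonzero monomial of the form `α·y^j`; hence in all cases the lattice set
associated to `F_S` intersects the `y`-axis. -/
theorem stmt3 (d : ℕ) (dir : Fin d → ℤ × ℤ)
    (ha : ∀ r, 0 ≤ (dir r).1)
    (hcop : ∀ r, IsCoprime (dir r).1 (dir r).2)
    (hb0 : ∀ r, (dir r).2 = 0 → (dir r).1 = 1)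
    (ha0 : ∀ r, (dir r).1 = 0 → (dir r).2 = 1) :
    ((∃ r, (dir r).2 < 0) →
      ∃ j : ℕ, MvPolynomial.coeff (Finsupp.single 1 j)
        (∏ r, dirPoly (dir r).1 (dir r).2) ≠ 0) ∧
    (∃ j : ℕ, MvPolynomial.coeff (Finsupp.single 1 j)
        (∏ r, dirPoly (dir r).1 (dir r).2) ≠ 0) :=
  stmt3_general d dir hb0
end

section
/- Let g, h : ℤ² → ℤ be finitely supported functions, and let (a,b) be a lattice direction. If g has zero line sums along all lattice lines with direction (a,b), then the function whose generating polynomial is the product G_g(x,y)·G_h(x,y) also has zero line sums along all lattice lines with direction (a,b). Consequently, for a set S of lattice directions, the function generated by F_S(x,y) = ∏_{(a,b)∈S} f_{(a,b)}(x,y) has zero line sums along all lines with directions in S (it is an S-ghost). -/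
/-- The line sum of a finitely supported function on `ℤ²` along the lattice line
`a·y = b·x + t`. -/
def lineSum (a b t : ℤ) (g : AddMonoidAlgebra ℤ (ℤ × ℤ)) : ℤ :=
  ∑ p ∈ g.coeff.support.filter (fun p => a * p.2 = b * p.1 + t), g.coeff p

/-- The element of `ℤ[ℤ²]` generated by the binomial `f_{(a,b)}`:
`x^a y^b - 1` if `b ≥ 0`, and `x^a - y^{-b}` if `b < 0`. -/
noncomputable def dirElt (a b : ℤ) : AddMonoidAlgebra ℤ (ℤ × ℤ) :=
  if 0 ≤ b then AddMonoidAlgebra.single (a, b) 1 - AddMonoidAlgebra.single (0, 0) 1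
  else AddMonoidAlgebra.single (a, 0) 1 - AddMonoidAlgebra.single (0, -b) 1

/-!
A line of direction `(a, b)` is a fibre of the linear form `(i, j) ↦ a j - b i`, so the line
sums of `g` are the coefficients of the push-forward of `G_g` along this form. Push-forward along
an additive hom is a ring hom `ℤ[ℤ²] → ℤ[ℤ]`; hence the functions with zero line sums in
direction `(a, b)` form its kernel, an ideal. The binomial `f_{(a,b)}` lies in it, because its two
monomials lie on a common line.
-/

open AddMonoidAlgebra

/-- Index of the line `a·y = b·x + t` through a lattice point: the value of `t`. -/
def lineIndex (a b : ℤ) : ℤ × ℤ →+ ℤ :=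
  a • AddMonoidHom.snd ℤ ℤ - b • AddMonoidHom.fst ℤ ℤ

lemma lineIndex_apply (a b : ℤ) (p : ℤ × ℤ) : lineIndex a b p = a * p.2 - b * p.1 := rfl

noncomputable abbrev lineProj (a b : ℤ) : AddMonoidAlgebra ℤ (ℤ × ℤ) →+* AddMonoidAlgebra ℤ ℤ :=
  mapDomainRingHom ℤ (lineIndex a b)

lemma lineSum_eq_coeff_lineProj (a b t : ℤ) (g : AddMonoidAlgebra ℤ (ℤ × ℤ)) :
    lineSum a b t g = (lineProj a b g).coeff t := by
  rw [lineSum, Finset.sum_filter]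
  change _ = (mapDomain (lineIndex a b) g).coeff t
  rw [coeff_mapDomain, Finsupp.mapDomain, Finsupp.sum_apply, Finsupp.sum]
  refine Finset.sum_congr rfl fun p _ => ?_
  have on_line : a * p.2 = b * p.1 + t ↔ lineIndex a b p = t := by
    rw [lineIndex_apply]; omega
  simp only [on_line, Finsupp.single_apply]

lemma forall_lineSum_eq_zero_iff (a b : ℤ) (g : AddMonoidAlgebra ℤ (ℤ × ℤ)) :
    (∀ t, lineSum a b t g = 0) ↔ lineProj a b g = 0 := by
  simp only [lineSum_eq_coeff_lineProj, AddMonoidAlgebra.ext_iff, Finsupp.ext_iff]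
  rfl

lemma lineProj_dirElt (a b : ℤ) : lineProj a b (dirElt a b) = 0 := by
  have same_line {p q : ℤ × ℤ} (h : lineIndex a b p = lineIndex a b q) :
      lineProj a b (single p 1 - single q 1) = 0 := by
    rw [map_sub, sub_eq_zero]
    change mapDomain _ (single p 1) = mapDomain _ (single q 1)
    rw [mapDomain_single, mapDomain_single, h]
  unfold dirElt
  split_ifs
  all_goals exact same_line (by simp only [lineIndex_apply]; ring)

/-- If `g` has zero line sums along all lines with direction `(a,b)`, so
does the function generated by the product `G_g · G_h`.  Consequently, for a set `S` of
lattice directions, the function generated by `F_S = ∏_{(a,b)∈S} f_{(a,b)}` has zero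
line sums along all lines with directions in `S` (it is an `S`-ghost). -/
theorem stmt5 :
    (∀ (a b : ℤ), 0 ≤ a → IsCoprime a b → (b = 0 → a = 1) → (a = 0 → b = 1) →
      ∀ g h : AddMonoidAlgebra ℤ (ℤ × ℤ),
        (∀ t : ℤ, lineSum a b t g = 0) → ∀ t : ℤ, lineSum a b t (g * h) = 0) ∧
    (∀ (d : ℕ) (dir : Fin d → ℤ × ℤ),
      (∀ r, 0 ≤ (dir r).1) → (∀ r, IsCoprime (dir r).1 (dir r).2) →
      (∀ r, (dir r).2 = 0 → (dir r).1 = 1) → (∀ r, (dir r).1 = 0 → (dir r).2 = 1) →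
      ∀ (r : Fin d) (t : ℤ),
        lineSum (dir r).1 (dir r).2 t (∏ s, dirElt (dir s).1 (dir s).2) = 0) := by
  constructor
  · intro a b _ _ _ _ g h hg
    rw [forall_lineSum_eq_zero_iff] at hg ⊢
    rw [map_mul, hg, zero_mul]
  · intro d dir _ _ _ _ r
    rw [forall_lineSum_eq_zero_iff, map_prod]
    exact Finset.prod_eq_zero (Finset.mem_univ r) (lineProj_dirElt _ _)
end

section
/- Let A ∈ ℝ^{m×n} be a binary matrix whose columns each contain exactly d ones, p ∈ ℝ^m, and let x* be the minimum Euclidean norm solution of A·x = p (i.e., the unique solution lying in the row space of A). Then every binary solution x̄ ∈ {0,1}^n of A·x = p satisfies ‖x̄ − x*‖₂² = ‖p‖₁/d − ‖x*‖₂². In particular, all binary solutions lie on a common hypersphere centered at x*. -/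
/-- Let `A` be a binary matrix each of whose columns contains exactly `d`
ones, and let `x*` be the minimum Euclidean norm solution of `A·x = p` (the solution
orthogonal to the null space of `A`).  Then every binary solution `x̄` satisfies
`‖x̄ - x*‖₂² = ‖p‖₁/d - ‖x*‖₂²`: all binary solutions lie on a common hypersphere
centered at `x*`. -/
theorem stmt9 (m n d : ℕ) (hd : 0 < d) (A : Matrix (Fin m) (Fin n) ℝ)
    (hbin : ∀ i j, A i j = 0 ∨ A i j = 1)
    (hcol : ∀ j, (Finset.univ.filter (fun i => A i j = 1)).card = d)
    (p : Fin m → ℝ) (xstar : Fin n → ℝ)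
    (hstar : A.mulVec xstar = p)
    (horth : ∀ z : Fin n → ℝ, A.mulVec z = 0 → ∑ j, xstar j * z j = 0)
    (xbar : Fin n → ℝ)
    (hbar : ∀ j, xbar j = 0 ∨ xbar j = 1)
    (hsol : A.mulVec xbar = p) :
    (∑ j, (xbar j - xstar j) ^ 2) = (∑ i, |p i|) / d - ∑ j, (xstar j) ^ 2 := by
  -- z = xbar - xstar is in the null space
  have hz : A.mulVec (xbar - xstar) = 0 := by
    rw [Matrix.mulVec_sub, hsol, hstar, sub_self]
  have h0 : ∑ j, xstar j * (xbar j - xstar j) = 0 := horth _ hz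
  -- column sums
  have hcolsum : ∀ j, ∑ i, A i j = (d : ℝ) := by
    intro j
    rw [← hcol j]
    rw [Finset.sum_filter_add_sum_filter_not Finset.univ (fun i => A i j = 1) (fun i => A i j)
      |>.symm]
    have h1 : ∑ i ∈ Finset.univ.filter (fun i => A i j = 1), A i j
        = ((Finset.univ.filter (fun i => A i j = 1)).card : ℝ) := by
      rw [Finset.sum_congr rfl (fun i hi => (Finset.mem_filter.mp hi).2)]
      simp
    have h2 : ∑ i ∈ Finset.univ.filter (fun i => ¬ A i j = 1), A i j = 0 := by
      apply Finset.sum_eq_zero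
      intro i hi
      rcases hbin i j with h | h
      · exact h
      · exact absurd h (Finset.mem_filter.mp hi).2
    rw [h1, h2, add_zero]
  -- p i nonneg
  have hp : ∀ i, p i = ∑ j, A i j * xbar j := by
    intro i; rw [← hsol]; rfl
  have hpnn : ∀ i, 0 ≤ p i := by
    intro i; rw [hp i]
    apply Finset.sum_nonneg
    intro j _
    rcases hbin i j with h | h <;> rcases hbar j with h' | h' <;> simp [h, h']
  have habs : ∑ i, |p i| = d * ∑ j, xbar j := by
    have : ∑ i, |p i| = ∑ i, p i := Finset.sum_congr rfl (fun i _ => abs_of_nonneg (hpnn i))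
    rw [this]
    calc ∑ i, p i = ∑ i, ∑ j, A i j * xbar j := Finset.sum_congr rfl (fun i _ => hp i)
      _ = ∑ j, (∑ i, A i j) * xbar j := by rw [Finset.sum_comm]; simp [Finset.sum_mul]
      _ = ∑ j, (d : ℝ) * xbar j := by
            exact Finset.sum_congr rfl (fun j _ => by rw [hcolsum j])
      _ = d * ∑ j, xbar j := by rw [Finset.mul_sum]
  have hsq : ∀ j, xbar j ^ 2 = xbar j := by
    intro j; rcases hbar j with h | h <;> simp [h]
  have hdd : (d : ℝ) ≠ 0 := Nat.cast_ne_zero.mpr hd.ne'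
  have key : ∑ j, xstar j * xbar j = ∑ j, xstar j ^ 2 := by
    have := h0
    rw [Finset.sum_congr rfl (fun j _ => mul_sub (xstar j) (xbar j) (xstar j)),
      Finset.sum_sub_distrib] at this
    have h' : ∀ j, xstar j * xstar j = xstar j ^ 2 := fun j => (sq (xstar j)).symm
    rw [Finset.sum_congr rfl (fun j _ => h' j)] at this
    linarith
  have expand : ∑ j, (xbar j - xstar j) ^ 2
      = ∑ j, xbar j - 2 * ∑ j, xstar j * xbar j + ∑ j, xstar j ^ 2 := by
    have : ∀ j, (xbar j - xstar j) ^ 2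
        = xbar j - 2 * (xstar j * xbar j) + xstar j ^ 2 := by
      intro j
      have := hsq j
      ring_nf
      nlinarith [hsq j]
    rw [Finset.sum_congr rfl (fun j _ => this j), Finset.sum_add_distrib,
      Finset.sum_sub_distrib, ← Finset.mul_sum]
  rw [expand, key, habs]
  field_simp
  ring
end
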